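/- Every loop polyomino in ℤ² has even length, and its length is either 4 or at least 8. -/
import Mathlib


open scoped Classical

/-- Two cells of `ℤ²` are adjacent iff they differ by a unit vector. -/
def Adj (p q : ℤ × ℤ) : Prop :=
  (p.1 - q.1).natAbs + (p.2 - q.2).natAbs = 1

/-- A finite set of cells is connected under edge-adjacency. -/
def ConnectedIn (S : Finset (ℤ × ℤ)) : Prop :=
  ∀ p ∈ S, ∀ q ∈ S,
    Relation.ReflTransGen (fun a b => a ∈ S ∧ b ∈ S ∧ Adj a b) p q

/-- A polyomino: a finite nonempty edge-connected subset of `ℤ²`. -/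
def IsPolyomino (S : Finset (ℤ × ℤ)) : Prop :=
  S.Nonempty ∧ ConnectedIn S

/-- Admissible: no four cells equally spaced on a straight line. -/
def Admissible (S : Finset (ℤ × ℤ)) : Prop :=
  ¬ ∃ (p v : ℤ × ℤ), v ≠ 0 ∧ p ∈ S ∧ p + v ∈ S ∧
      p + (2 : ℤ) • v ∈ S ∧ p + (3 : ℤ) • v ∈ S

/-- Degree of a cell in the adjacency graph restricted to `S`. -/
noncomputable def degIn (S : Finset (ℤ × ℤ)) (p : ℤ × ℤ) : ℕ :=
  (S.filter fun q => Adj p q).card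

/-- A path polyomino: either a single cell, or a connected set where every cell
has degree at most 2 and exactly two cells have degree 1. -/
def IsPathPoly (S : Finset (ℤ × ℤ)) : Prop :=
  IsPolyomino S ∧
    (S.card = 1 ∨
      ((∀ p ∈ S, degIn S p ≤ 2) ∧ (S.filter fun p => degIn S p = 1).card = 2))

/-- A loop: a polyomino all of whose cells have degree exactly 2. -/
def IsLoop (S : Finset (ℤ × ℤ)) : Prop :=
  IsPolyomino S ∧ ∀ p ∈ S, degIn S p = 2

/-- Graph distance within `S` (shortest walk staying in `S`). -/
noncomputable def distIn (S : Finset (ℤ × ℤ)) (p q : ℤ × ℤ) : ℕ :=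
  sInf {n | ∃ f : ℕ → ℤ × ℤ, f 0 = p ∧ f n = q ∧ (∀ i ≤ n, f i ∈ S) ∧
    ∀ i < n, Adj (f i) (f (i + 1))}

/-- Graph diameter of `S`. -/
noncomputable def diamIn (S : Finset (ℤ × ℤ)) : ℕ :=
  sSup {d | ∃ p ∈ S, ∃ q ∈ S, distIn S p q = d}

/-- Isometries of the square lattice: bijections of `ℤ²` preserving squared
Euclidean distance (compositions of translations, 90° rotations, reflections). -/
def IsLatticeIso (f : ℤ × ℤ → ℤ × ℤ) : Prop :=
  Function.Bijective f ∧ ∀ p q : ℤ × ℤ,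
    ((f p).1 - (f q).1) ^ 2 + ((f p).2 - (f q).2) ^ 2 =
      (p.1 - q.1) ^ 2 + (p.2 - q.2) ^ 2

/-- Two finite cell sets are equivalent up to a lattice isometry. -/
def IsoEquiv (S T : Finset (ℤ × ℤ)) : Prop :=
  ∃ f, IsLatticeIso f ∧ S.image f = T

lemma adj_symm {p q : ℤ × ℤ} : Adj p q ↔ Adj q p := by simp only [Adj]; omega

lemma adj_irrefl (p : ℤ × ℤ) : ¬ Adj p p := by simp [Adj]

lemma adj_par {p q : ℤ × ℤ} (h : Adj p q) : (p.1+p.2) % 2 = 0 ↔ ¬ ((q.1+q.2) % 2 = 0) := by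
  simp only [Adj] at h; omega

lemma filter_eq_pair {S : Finset (ℤ×ℤ)} {P : ℤ×ℤ → Prop} [DecidablePred P] {q1 q2 : ℤ×ℤ}
    (hc : (S.filter P).card = 2) (h1 : q1 ∈ S.filter P) (h2 : q2 ∈ S.filter P)
    (hne : q1 ≠ q2) : S.filter P = {q1, q2} := by
  refine (Finset.eq_of_subset_of_card_le ?_ ?_).symm
  · exact Finset.insert_subset h1 (Finset.singleton_subset_iff.2 h2)
  · rw [hc, Finset.card_insert_of_notMem (by simp [hne]), Finset.card_singleton]

lemma filter_force {S : Finset (ℤ×ℤ)} {P : ℤ×ℤ→Prop} [DecidablePred P] {a b : ℤ×ℤ}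
    (hsub : S.filter P ⊆ {a,b}) (hc : (S.filter P).card = 2) (hab : a ≠ b) :
    a ∈ S.filter P ∧ b ∈ S.filter P ∧ S.filter P = {a,b} := by
  have h := Finset.eq_of_subset_of_card_le hsub
    (by rw [hc, Finset.card_insert_of_notMem (by simp [hab]), Finset.card_singleton])
  refine ⟨h ▸ by simp, h ▸ by simp, h⟩

lemma loop_even (S : Finset (ℤ × ℤ)) (hdeg : ∀ p ∈ S, degIn S p = 2) : Even S.card := by
  set B := S.filter (fun p => (p.1+p.2) % 2 = 0) with hB
  set W := S.filter (fun p => ¬ ((p.1+p.2) % 2 = 0)) with hW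
  have hBW : B.card + W.card = S.card := Finset.card_filter_add_card_filter_not _
  have claim1 : ∀ p ∈ B, (∑ q ∈ W, if Adj p q then 1 else 0) = degIn S p := by
    intro p hp
    rw [Finset.mem_filter] at hp
    have : degIn S p = (∑ q ∈ B, if Adj p q then 1 else 0)
        + (∑ q ∈ W, if Adj p q then 1 else 0) := by
      rw [degIn, Finset.card_filter, hB, hW, Finset.sum_filter_add_sum_filter_not]
    rw [this]
    have hz : (∑ q ∈ B, if Adj p q then 1 else 0) = 0 := by
      apply Finset.sum_eq_zero
      intro q hq
      rw [Finset.mem_filter] at hq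
      by_cases h : Adj p q
      · exact absurd hq.2 (((adj_par h).1 hp.2))
      · simp [h]
    omega
  have claim2 : ∀ q ∈ W, (∑ p ∈ B, if Adj p q then 1 else 0) = degIn S q := by
    intro q hq
    rw [Finset.mem_filter] at hq
    have : degIn S q = (∑ p ∈ B, if Adj p q then 1 else 0)
        + (∑ p ∈ W, if Adj p q then 1 else 0) := by
      rw [degIn, Finset.card_filter, hB, hW, ← Finset.sum_filter_add_sum_filter_not S
        (fun p => (p.1+p.2) % 2 = 0)]
      congr 1 <;> exact Finset.sum_congr rfl (fun p _ => by rw [adj_symm])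
    rw [this]
    have hz : (∑ p ∈ W, if Adj p q then 1 else 0) = 0 := by
      apply Finset.sum_eq_zero
      intro p hp
      rw [Finset.mem_filter] at hp
      by_cases h : Adj p q
      · exact absurd ((adj_par h).2 hq.2) hp.2
      · simp [h]
    omega
  have hBsum : ∑ p ∈ B, degIn S p = 2 * B.card := by
    rw [Finset.sum_congr rfl (fun p hp => hdeg p (Finset.mem_filter.1 hp).1)]
    rw [Finset.sum_const, smul_eq_mul, mul_comm]
  have hWsum : ∑ q ∈ W, degIn S q = 2 * W.card := by
    rw [Finset.sum_congr rfl (fun p hp => hdeg p (Finset.mem_filter.1 hp).1)]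
    rw [Finset.sum_const, smul_eq_mul, mul_comm]
  have key : 2 * B.card = 2 * W.card := by
    rw [← hBsum, ← hWsum,
      ← Finset.sum_congr rfl claim1, ← Finset.sum_congr rfl claim2, Finset.sum_comm]
  refine ⟨B.card, by omega⟩

lemma degIn_trans (S : Finset (ℤ×ℤ)) (c d : ℤ) (p : ℤ×ℤ) :
    degIn (S.image (fun q => (q.1 - c, q.2 - d))) (p.1 - c, p.2 - d) = degIn S p := by
  have hinj : Function.Injective (fun q : ℤ×ℤ => (q.1 - c, q.2 - d)) := by
    rintro ⟨a1,a2⟩ ⟨b1,b2⟩ h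
    simp only [Prod.mk.injEq] at h ⊢
    omega
  rw [degIn, degIn, Finset.filter_image, Finset.card_image_of_injective _ hinj]
  congr 1
  apply Finset.filter_congr
  rintro ⟨qa, qb⟩ _
  simp only [Function.comp, Adj]
  constructor <;> intro h <;> omega

lemma no6 (S : Finset (ℤ×ℤ)) (hdeg : ∀ p ∈ S, degIn S p = 2)
    (h0 : ((0,0) : ℤ×ℤ) ∈ S) (hsum : ∀ q ∈ S, 0 ≤ q.1 + q.2)
    (hx : ∀ q ∈ S, q.1 + q.2 = 0 → 0 ≤ q.1) (hcard : S.card = 6) : False := by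
  have hd : ∀ p ∈ S, (S.filter fun q => Adj p q).card = 2 := hdeg
  -- neighbors of (0,0)
  have hsub0 : (S.filter fun q => Adj (0,0) q) ⊆ {((1,0):ℤ×ℤ), (0,1)} := by
    rintro ⟨qa, qb⟩ hq
    rw [Finset.mem_filter] at hq
    obtain ⟨hqS, hadj⟩ := hq
    simp only [Adj] at hadj
    have h1 := hsum _ hqS
    simp only [Finset.mem_insert, Finset.mem_singleton, Prod.mk.injEq]
    simp only at h1
    omega
  obtain ⟨hm10, hm01, hN0⟩ := filter_force hsub0 (hd _ h0) (by decide)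
  have h10 : ((1,0):ℤ×ℤ) ∈ S := (Finset.mem_filter.1 hm10).1
  have h01 : ((0,1):ℤ×ℤ) ∈ S := (Finset.mem_filter.1 hm01).1
  by_cases h11 : ((1,1):ℤ×ℤ) ∈ S
  · -- Case A : unit square closed, two leftover cells have degree ≤ 1
    have hN10 : (S.filter fun q => Adj (1,0) q) = {((0,0):ℤ×ℤ),(1,1)} :=
      filter_eq_pair (hd _ h10)
        (Finset.mem_filter.2 ⟨h0, by norm_num [Adj]⟩)
        (Finset.mem_filter.2 ⟨h11, by norm_num [Adj]⟩) (by decide)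
    have hN01 : (S.filter fun q => Adj (0,1) q) = {((0,0):ℤ×ℤ),(1,1)} :=
      filter_eq_pair (hd _ h01)
        (Finset.mem_filter.2 ⟨h0, by norm_num [Adj]⟩)
        (Finset.mem_filter.2 ⟨h11, by norm_num [Adj]⟩) (by decide)
    have hN11 : (S.filter fun q => Adj (1,1) q) = {((1,0):ℤ×ℤ),(0,1)} :=
      filter_eq_pair (hd _ h11)
        (Finset.mem_filter.2 ⟨h10, by norm_num [Adj]⟩)
        (Finset.mem_filter.2 ⟨h01, by norm_num [Adj]⟩) (by decide)
    set Q : Finset (ℤ×ℤ) := {(0,0),(1,0),(0,1),(1,1)} with hQ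
    have hQS : Q ⊆ S := by
      intro q hq
      simp only [hQ, Finset.mem_insert, Finset.mem_singleton] at hq
      rcases hq with h|h|h|h <;> subst h <;> assumption
    have hQcard : Q.card = 4 := by decide
    have hRcard : (S \ Q).card = 2 := by
      rw [Finset.card_sdiff_of_subset hQS, hcard, hQcard]
    obtain ⟨r, hr⟩ : (S \ Q).Nonempty := by
      rw [← Finset.card_pos, hRcard]; norm_num
    have hrS : r ∈ S := (Finset.mem_sdiff.1 hr).1
    have hrQ : r ∉ Q := (Finset.mem_sdiff.1 hr).2
    have hsubr : (S.filter fun q => Adj r q) ⊆ (S \ Q).erase r := by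
      intro q hq
      rw [Finset.mem_filter] at hq
      obtain ⟨hqS, hadj⟩ := hq
      have hqQ : q ∉ Q := by
        intro hqQ
        have hrN : r ∈ S.filter fun z => Adj q z :=
          Finset.mem_filter.2 ⟨hrS, adj_symm.1 hadj⟩
        rw [hQ] at hqQ
        simp only [Finset.mem_insert, Finset.mem_singleton] at hqQ
        apply hrQ
        rcases hqQ with h|h|h|h <;> subst h
        · rw [hN0] at hrN
          simp only [hQ, Finset.mem_insert, Finset.mem_singleton] at hrN ⊢; tauto
        · rw [hN10] at hrN
          simp only [hQ, Finset.mem_insert, Finset.mem_singleton] at hrN ⊢; tauto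
        · rw [hN01] at hrN
          simp only [hQ, Finset.mem_insert, Finset.mem_singleton] at hrN ⊢; tauto
        · rw [hN11] at hrN
          simp only [hQ, Finset.mem_insert, Finset.mem_singleton] at hrN ⊢; tauto
      refine Finset.mem_erase.2 ⟨?_, Finset.mem_sdiff.2 ⟨hqS, hqQ⟩⟩
      rintro rfl; exact adj_irrefl _ hadj
    have hle : (S.filter fun q => Adj r q).card ≤ 1 := by
      calc (S.filter fun q => Adj r q).card ≤ ((S \ Q).erase r).card :=
            Finset.card_le_card hsubr
        _ = (S \ Q).card - 1 := Finset.card_erase_of_mem hr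
        _ = 1 := by rw [hRcard]
    rw [hd _ hrS] at hle
    omega
  · -- (1,1) ∉ S
    have hsub01 : (S.filter fun q => Adj (0,1) q) ⊆ {((0,0):ℤ×ℤ), (0,2)} := by
      rintro ⟨qa, qb⟩ hq
      rw [Finset.mem_filter] at hq
      obtain ⟨hqS, hadj⟩ := hq
      simp only [Adj] at hadj
      have h1 := hsum _ hqS
      simp only at h1
      have h2 : ¬(qa = 1 ∧ qb = 1) := by rintro ⟨rfl, rfl⟩; exact h11 hqS
      have h3 : qa + qb = 0 → 0 ≤ qa := fun h => hx _ hqS h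
      simp only [Finset.mem_insert, Finset.mem_singleton, Prod.mk.injEq]
      by_cases hs : qa + qb = 0
      · have := h3 hs; omega
      · omega
    obtain ⟨-, hm02, hN01⟩ := filter_force hsub01 (hd _ h01) (by decide)
    have h02 : ((0,2):ℤ×ℤ) ∈ S := (Finset.mem_filter.1 hm02).1
    by_cases h1m : ((1,-1):ℤ×ℤ) ∈ S
    · -- Case B
      have hsub1m : (S.filter fun q => Adj (1,-1) q) ⊆ {((1,0):ℤ×ℤ), (2,-1)} := by
        rintro ⟨qa, qb⟩ hq
        rw [Finset.mem_filter] at hq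
        obtain ⟨hqS, hadj⟩ := hq
        simp only [Adj] at hadj
        have h1 := hsum _ hqS
        simp only at h1
        simp only [Finset.mem_insert, Finset.mem_singleton, Prod.mk.injEq]
        omega
      obtain ⟨-, hm2m, hN1m⟩ := filter_force hsub1m (hd _ h1m) (by decide)
      have h2m : ((2,-1):ℤ×ℤ) ∈ S := (Finset.mem_filter.1 hm2m).1
      set T : Finset (ℤ×ℤ) := {(0,0),(1,0),(0,1),(0,2),(1,-1),(2,-1)} with hT
      have hTS : T ⊆ S := by
        intro q hq
        simp only [hT, Finset.mem_insert, Finset.mem_singleton] at hq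
        rcases hq with h|h|h|h|h|h <;> subst h <;> assumption
      have hST : S = T := (Finset.eq_of_subset_of_card_le hTS (by rw [hcard]; decide)).symm
      have hsub02 : (S.filter fun q => Adj (0,2) q) ⊆ {((0,1):ℤ×ℤ)} := by
        rintro ⟨qa, qb⟩ hq
        rw [Finset.mem_filter] at hq
        obtain ⟨hqS, hadj⟩ := hq
        rw [hST, hT] at hqS
        simp only [Finset.mem_insert, Finset.mem_singleton, Prod.mk.injEq] at hqS ⊢
        simp only [Adj] at hadj
        omega
      have hle := Finset.card_le_card hsub02
      rw [hd _ h02, Finset.card_singleton] at hle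
      omega
    · -- Case C : (1,1) ∉ S, (1,-1) ∉ S
      have hsub10 : (S.filter fun q => Adj (1,0) q) ⊆ {((0,0):ℤ×ℤ), (2,0)} := by
        rintro ⟨qa, qb⟩ hq
        rw [Finset.mem_filter] at hq
        obtain ⟨hqS, hadj⟩ := hq
        simp only [Adj] at hadj
        have h1 := hsum _ hqS
        simp only at h1
        have h2 : ¬(qa = 1 ∧ qb = 1) := by rintro ⟨rfl, rfl⟩; exact h11 hqS
        have h2m' : ¬(qa = 1 ∧ qb = -1) := by rintro ⟨rfl, rfl⟩; exact h1m hqS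
        simp only [Finset.mem_insert, Finset.mem_singleton, Prod.mk.injEq]
        omega
      obtain ⟨-, hm20, hN10⟩ := filter_force hsub10 (hd _ h10) (by decide)
      have h20 : ((2,0):ℤ×ℤ) ∈ S := (Finset.mem_filter.1 hm20).1
      set T : Finset (ℤ×ℤ) := {(0,0),(1,0),(2,0),(0,1),(0,2)} with hT
      have hTS : T ⊆ S := by
        intro q hq
        simp only [hT, Finset.mem_insert, Finset.mem_singleton] at hq
        rcases hq with h|h|h|h|h <;> subst h <;> assumption
      have hTcard : T.card = 5 := by decide
      obtain ⟨c, hc⟩ : (S \ T).Nonempty := by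
        rw [← Finset.card_pos, Finset.card_sdiff_of_subset hTS, hcard, hTcard]; norm_num
      obtain ⟨c1, c2⟩ := c
      have hcS : ((c1,c2):ℤ×ℤ) ∈ S := (Finset.mem_sdiff.1 hc).1
      have hcT : ((c1,c2):ℤ×ℤ) ∉ T := (Finset.mem_sdiff.1 hc).2
      have heq : insert ((c1,c2):ℤ×ℤ) T = S :=
        Finset.eq_of_subset_of_card_le (Finset.insert_subset hcS hTS)
          (by rw [hcard, Finset.card_insert_of_notMem hcT, hTcard])
      have hSsub : S ⊆ insert ((c1,c2):ℤ×ℤ) T := by rw [heq]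
      have hadj20c : Adj (2,0) (c1,c2) := by
        obtain ⟨q, hq, hqne⟩ := Finset.exists_mem_ne
          (by rw [hd _ h20]; norm_num) ((1,0) : ℤ×ℤ)
        obtain ⟨qa, qb⟩ := q
        rw [Finset.mem_filter] at hq
        obtain ⟨hqS, hadj⟩ := hq
        have hmem := hSsub hqS
        rw [hT] at hmem
        simp only [Finset.mem_insert, Finset.mem_singleton, Prod.mk.injEq] at hmem
        have hne : ¬(qa = 1 ∧ qb = 0) := by
          rintro ⟨rfl, rfl⟩; exact hqne rfl
        simp only [Adj] at hadj ⊢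
        omega
      have hadj02c : Adj (0,2) (c1,c2) := by
        obtain ⟨q, hq, hqne⟩ := Finset.exists_mem_ne
          (by rw [hd _ h02]; norm_num) ((0,1) : ℤ×ℤ)
        obtain ⟨qa, qb⟩ := q
        rw [Finset.mem_filter] at hq
        obtain ⟨hqS, hadj⟩ := hq
        have hmem := hSsub hqS
        rw [hT] at hmem
        simp only [Finset.mem_insert, Finset.mem_singleton, Prod.mk.injEq] at hmem
        have hne : ¬(qa = 0 ∧ qb = 1) := by
          rintro ⟨rfl, rfl⟩; exact hqne rfl
        simp only [Adj] at hadj ⊢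
        omega
      simp only [Adj] at hadj20c hadj02c
      omega

theorem loop_even_and_4_or_ge_8 (S : Finset (ℤ × ℤ)) (hloop : IsLoop S) :
    Even S.card ∧ (S.card = 4 ∨ 8 ≤ S.card) := by
  obtain ⟨⟨hne, -⟩, hdeg⟩ := hloop
  have heven := loop_even S hdeg
  obtain ⟨p, hp⟩ := hne
  have hsubp : (S.filter fun q => Adj p q) ⊆ S.erase p := by
    intro q hq
    rw [Finset.mem_filter] at hq
    exact Finset.mem_erase.2 ⟨by rintro rfl; exact adj_irrefl _ hq.2, hq.1⟩
  have h3 : 3 ≤ S.card := by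
    have hle := Finset.card_le_card hsubp
    have hdp := hdeg p hp
    rw [degIn] at hdp
    rw [hdp, Finset.card_erase_of_mem hp] at hle
    have := Finset.card_pos.2 ⟨p, hp⟩
    omega
  have h6 : S.card ≠ 6 := by
    intro hcard6
    have hSne : S.Nonempty := ⟨p, hp⟩
    -- minimal antidiagonal
    set m := (S.image (fun q => q.1 + q.2)).min' (hSne.image _) with hmdef
    have hm : ∀ q ∈ S, m ≤ q.1 + q.2 := fun q hq =>
      Finset.min'_le _ _ (Finset.mem_image_of_mem _ hq)
    have hmmem := (S.image (fun q => q.1 + q.2)).min'_mem (hSne.image _)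
    rw [Finset.mem_image] at hmmem
    obtain ⟨w, hwS, hwm⟩ := hmmem
    set S0 := S.filter (fun q => q.1 + q.2 = m) with hS0def
    have hS0ne : S0.Nonempty := ⟨w, Finset.mem_filter.2 ⟨hwS, hwm⟩⟩
    set a := (S0.image Prod.fst).min' (hS0ne.image _) with hadef
    have ha : ∀ q ∈ S, q.1 + q.2 = m → a ≤ q.1 := fun q hq hqm =>
      Finset.min'_le _ _ (Finset.mem_image_of_mem _ (Finset.mem_filter.2 ⟨hq, hqm⟩))
    have hamem := (S0.image Prod.fst).min'_mem (hS0ne.image _)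
    rw [Finset.mem_image] at hamem
    obtain ⟨p0, hp0S0, hp0a⟩ := hamem
    rw [Finset.mem_filter] at hp0S0
    obtain ⟨hp0S, hp0m⟩ := hp0S0
    -- translate so that p0 goes to the origin
    set f : ℤ × ℤ → ℤ × ℤ := fun q => (q.1 - p0.1, q.2 - p0.2) with hfdef
    have hfinj : Function.Injective f := by
      rintro ⟨a1,a2⟩ ⟨b1,b2⟩ h
      simp only [hfdef, Prod.mk.injEq] at h ⊢
      omega
    apply no6 (S.image f)
    · intro q hq
      rw [Finset.mem_image] at hq
      obtain ⟨r, hrS, rfl⟩ := hq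
      have := degIn_trans S p0.1 p0.2 r
      rw [hfdef]
      rw [this]
      exact hdeg r hrS
    · have : f p0 = (0, 0) := by simp [hfdef]
      exact this ▸ Finset.mem_image_of_mem f hp0S
    · intro q hq
      rw [Finset.mem_image] at hq
      obtain ⟨r, hrS, rfl⟩ := hq
      have := hm r hrS
      simp only [hfdef]
      omega
    · intro q hq
      rw [Finset.mem_image] at hq
      obtain ⟨r, hrS, rfl⟩ := hq
      simp only [hfdef]
      intro hsum0
      have hrm : r.1 + r.2 = m := by omega
      have := ha r hrS hrm
      omega
    · rw [Finset.card_image_of_injective _ hfinj, hcard6]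
  refine ⟨heven, ?_⟩
  obtain ⟨k, hk⟩ := heven
  omega
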